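/- arXiv:0704.1327 — 2 statements merged into one kernel-verified Lean document; each statement's English description precedes it below -/
import Mathlib

section
/- Let n = p_1^{e_1} ⋯ p_k^{e_k} be the prime factorization of a positive integer n > 1 with p_1 < p_2 < ⋯ < p_k, and let z ≥ 1 be a real number. Then Δ_0(n) ≤ z if and only if for each i with 1 ≤ i ≤ k, the inequality p_i ≤ z · ∏_{j < i} p_j^{e_j} holds (where the empty product for i = 1 equals 1). -/
/-!
`Δ₀(n) ≤ z` says that every proper divisor `d` of `n` is followed by a divisor in `(d, z d]`.
If so, and `n = a b` with every prime factor of `b` at least `q`, the divisor following `a` does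
not divide `a`, hence shares a prime with `b`, so `q ≤ z a`; for `a = ∏_{j<i} p_j^{e_j}` this is
the condition on `p_i`. Conversely, the intervals `[d, z d)` with `d ∣ m` cover `[1, z m)` for
`m = 1`, and the covering survives passing from `m` to `m p` whenever `p ≤ z m`: rescaling by `p`
covers `[z m, z m p)`. Multiplying in the prime powers in increasing order of the primes yields the
covering for `n`, and the interval containing `z d` provides the divisor following `d`.
-/

/-- `Δ₀(n)`: the maximum of the ratios `d_{i+1}/d_i` of consecutive divisors of `n`
(sorted increasingly), with `Δ₀(1) = 1`. -/
noncomputable def Delta0 (n : ℕ) : ℝ :=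
  let l := n.divisors.sort (· ≤ ·)
  (l.zip l.tail).foldr (fun q r => max ((q.2 : ℝ) / (q.1 : ℝ)) r) 1

theorem List.mem_zip_tail_iff_of_pairwise_lt {α : Type*} [LinearOrder α] :
    ∀ {l : List α}, l.Pairwise (· < ·) → ∀ {a b : α},
      (a, b) ∈ l.zip l.tail ↔ a ∈ l ∧ b ∈ l ∧ a < b ∧ ∀ c ∈ l, a < c → b ≤ c
  | [], _, _, _ => by simp
  | [_], _, _, _ => by grind
  | x :: y :: t, h, a, b => by
    have ih := mem_zip_tail_iff_of_pairwise_lt h.of_cons (a := a) (b := b)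
    have hx : ∀ c ∈ y :: t, x < c := (List.pairwise_cons.1 h).1
    have hy : ∀ c ∈ y :: t, y ≤ c := by
      simpa using fun c hc => ((List.pairwise_cons.1 h.of_cons).1 c hc).le
    have hy' : y ∈ y :: t := List.mem_cons_self
    rw [List.tail_cons] at ih
    rw [List.tail_cons, List.zip_cons_cons, List.mem_cons, Prod.mk.injEq, ih]
    generalize y :: t = l at *
    simp only [List.mem_cons, forall_eq_or_imp]
    grind

theorem List.foldr_max_le_iff {α β : Type*} [LinearOrder β] (f : α → β) (b z : β) (l : List α) :
    l.foldr (fun a r => max (f a) r) b ≤ z ↔ b ≤ z ∧ ∀ a ∈ l, f a ≤ z := by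
  induction l with
  | nil => simp
  | cons a l ih => simp only [foldr_cons, max_le_iff, ih, mem_cons, forall_eq_or_imp]; tauto

def DivisorsRatioDense (z : ℝ) (n : ℕ) : Prop :=
  ∀ d, d ∣ n → d < n → ∃ d', d' ∣ n ∧ d < d' ∧ (d' : ℝ) ≤ z * d

theorem delta0_le_iff {n : ℕ} (hn : n ≠ 0) {z : ℝ} :
    Delta0 n ≤ z ↔ 1 ≤ z ∧ DivisorsRatioDense z n := by
  have hsort := n.divisors.sortedLT_sort.pairwise
  have hmem : ∀ {d}, d ∈ n.divisors.sort (· ≤ ·) ↔ d ∣ n := by simp [hn]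
  have hpos : ∀ {d}, d ∣ n → (0 : ℝ) < d := fun hd => by
    exact_mod_cast Nat.pos_of_dvd_of_pos hd (Nat.pos_of_ne_zero hn)
  rw [Delta0, List.foldr_max_le_iff]
  set l := n.divisors.sort (· ≤ ·)
  refine and_congr_right fun _ => ⟨fun h d hd hdn => ?_, fun h ⟨a, b⟩ hab => ?_⟩
  · have hne : (n.divisors.filter (d < ·)).Nonempty := ⟨n, by simp [hn, hdn]⟩
    set b := (n.divisors.filter (d < ·)).min' hne
    obtain ⟨hb, hdb⟩ := Finset.mem_filter.1 (Finset.min'_mem _ hne)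
    replace hb := Nat.dvd_of_mem_divisors hb
    have hsucc : (d, b) ∈ l.zip l.tail := by
      refine (List.mem_zip_tail_iff_of_pairwise_lt hsort).2
        ⟨hmem.2 hd, hmem.2 hb, hdb, fun c hc hdc => Finset.min'_le _ _ ?_⟩
      simpa [hn, hdc] using hmem.1 hc
    exact ⟨b, hb, hdb, (div_le_iff₀ (hpos hd)).1 (h _ hsucc)⟩
  · obtain ⟨ha, hb, hab, hmin⟩ := (List.mem_zip_tail_iff_of_pairwise_lt hsort).1 hab
    obtain ⟨d', hd', had', hd'z⟩ :=
      h a (hmem.1 ha) (hab.trans_le (Nat.le_of_dvd (Nat.pos_of_ne_zero hn) (hmem.1 hb)))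
    change (b : ℝ) / a ≤ z
    rw [div_le_iff₀ (hpos (hmem.1 ha))]
    exact le_trans (by exact_mod_cast hmin d' (hmem.2 hd') had') hd'z

def DivisorsIcoCover (z : ℝ) (m : ℕ) : Prop :=
  ∀ x ∈ Set.Ico 1 (z * m), ∃ d, d ∣ m ∧ x ∈ Set.Ico (d : ℝ) (z * d)

section DivisorsIcoCover

variable {z : ℝ} {m p : ℕ}

theorem divisorsIcoCover_one : DivisorsIcoCover z 1 :=
  fun x hx => ⟨1, one_dvd 1, by simpa using hx⟩

theorem divisorsIcoCover_zero : DivisorsIcoCover z 0 :=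
  fun x hx => by simp at hx

theorem DivisorsIcoCover.mul (hm : DivisorsIcoCover z m) (hp : (p : ℝ) ≤ z * m) :
    DivisorsIcoCover z (m * p) := by
  rintro x ⟨hx1, hx2⟩
  rcases lt_or_ge x (z * m) with hxm | hxm
  · obtain ⟨d, hd, hx⟩ := hm x ⟨hx1, hxm⟩
    exact ⟨d, hd.mul_right p, hx⟩
  rcases p.eq_zero_or_pos with rfl | hp0
  · exact divisorsIcoCover_zero x ⟨hx1, by simpa using hx2⟩
  have hp0' : (0 : ℝ) < p := by exact_mod_cast hp0
  push_cast at hx2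
  obtain ⟨d, hd, hdx, hxd⟩ := hm (x / p)
    ⟨(one_le_div hp0').2 (hp.trans hxm), (div_lt_iff₀ hp0').2 (by linarith)⟩
  refine ⟨d * p, mul_dvd_mul_right hd p, ?_, ?_⟩
  · push_cast; exact (le_div_iff₀ hp0').1 hdx
  · push_cast; rw [← mul_assoc]; exact (div_lt_iff₀ hp0').1 hxd

theorem DivisorsIcoCover.mul_pow (hm : DivisorsIcoCover z m) (hp : (p : ℝ) ≤ z * m) (e : ℕ) :
    DivisorsIcoCover z (m * p ^ e) := by
  induction e with
  | zero => simpa using hm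
  | succ e ih =>
    rw [pow_succ, ← mul_assoc]
    rcases p.eq_zero_or_pos with rfl | hp0
    · simpa using divisorsIcoCover_zero
    refine ih.mul (hp.trans ?_)
    push_cast
    rw [← mul_assoc]
    exact le_mul_of_one_le_right ((Nat.cast_nonneg p).trans hp)
      (one_le_pow₀ (by exact_mod_cast hp0 : (1 : ℝ) ≤ p))

theorem DivisorsIcoCover.divisorsRatioDense (h : DivisorsIcoCover z m) (hz : 1 ≤ z) :
    DivisorsRatioDense z m := by
  intro d hd hdm
  have hd1 : (1 : ℝ) ≤ d := by exact_mod_cast Nat.pos_of_dvd_of_pos hd (by omega)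
  have hz0 : 0 < z := by linarith
  obtain ⟨d', hd', hd'z, hzd'⟩ := h (z * d)
    ⟨one_le_mul_of_one_le_of_one_le hz hd1, by gcongr⟩
  exact ⟨d', hd', by exact_mod_cast lt_of_mul_lt_mul_left hzd' hz0.le, hd'z⟩

end DivisorsIcoCover

theorem divisorsIcoCover_prod {ι : Type*} [LinearOrder ι] {z : ℝ} {p e : ι → ℕ} {s : Finset ι}
    (h : ∀ i ∈ s, (p i : ℝ) ≤ z * ∏ j ∈ s with j < i, (p j : ℝ) ^ e j) :
    DivisorsIcoCover z (∏ i ∈ s, p i ^ e i) := by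
  induction s using Finset.induction_on_max with
  | empty => simpa using divisorsIcoCover_one
  | insert a s hlt ih =>
    have ha : a ∉ s := fun has => (hlt a has).false
    have hbelow : ∀ i ∈ s, {j ∈ insert a s | j < i} = {j ∈ s | j < i} := fun i hi => by
      rw [Finset.filter_insert, if_neg (hlt i hi).not_gt]
    have hbelow_a : {j ∈ insert a s | j < a} = s := by
      rw [Finset.filter_insert, if_neg (lt_irrefl a), Finset.filter_true_of_mem hlt]
    rw [Finset.prod_insert ha, mul_comm]
    refine (ih fun i hi => ?_).mul_pow ?_ (e a)
    · rw [← hbelow i hi]; exact h i (Finset.mem_insert_of_mem hi)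
    · push_cast; rw [← hbelow_a]; exact h a (Finset.mem_insert_self a s)

theorem DivisorsRatioDense.le_mul_of_mul_eq {z : ℝ} {n a b q : ℕ} (h : DivisorsRatioDense z n)
    (hab : a * b = n) (han : a < n) (hq : ∀ r, r.Prime → r ∣ b → q ≤ r) : (q : ℝ) ≤ z * a := by
  have ha0 : 0 < a := Nat.pos_of_ne_zero fun ha => by simp [ha] at hab; omega
  obtain ⟨d, hd, had, hdz⟩ := h a (Dvd.intro b hab) han
  have hnot : ¬ d.Coprime b := fun hcop =>
    (Nat.le_of_dvd ha0 (hcop.dvd_of_dvd_mul_right (hab ▸ hd))).not_gt had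
  obtain ⟨r, hr, hrd, hrb⟩ := Nat.Prime.not_coprime_iff_dvd.1 hnot
  calc (q : ℝ) ≤ r := by exact_mod_cast hq r hr hrb
    _ ≤ d := by exact_mod_cast Nat.le_of_dvd (by omega) hrd
    _ ≤ z * a := hdz

theorem DivisorsRatioDense.le_mul_prod_filter_lt {ι : Type*} [LinearOrder ι] {z : ℝ}
    {p e : ι → ℕ} {s : Finset ι} (hp : ∀ i ∈ s, (p i).Prime) (he : ∀ i ∈ s, 0 < e i)
    (hmono : MonotoneOn p s) (h : DivisorsRatioDense z (∏ i ∈ s, p i ^ e i)) :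
    ∀ i ∈ s, (p i : ℝ) ≤ z * ∏ j ∈ s with j < i, (p j : ℝ) ^ e j := by
  intro i hi
  have hsplit := Finset.prod_filter_mul_prod_filter_not s (· < i) (fun j => p j ^ e j)
  have hsmall : 0 < ∏ j ∈ s with j < i, p j ^ e j :=
    Finset.prod_pos fun j hj => pow_pos (hp j (Finset.mem_filter.1 hj).1).pos _
  have hlarge : 2 ≤ ∏ j ∈ s with ¬ j < i, p j ^ e j :=
    calc 2 ≤ p i := (hp i hi).two_le
      _ ≤ p i ^ e i := Nat.le_self_pow (he i hi).ne' _
      _ ≤ _ := Finset.single_le_prod'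
        (fun j hj => Nat.one_le_pow _ _ (hp j (Finset.mem_filter.1 hj).1).pos)
        (Finset.mem_filter.2 ⟨hi, lt_irrefl i⟩)
  have hprimes : ∀ r, r.Prime → r ∣ ∏ j ∈ s with ¬ j < i, p j ^ e j → p i ≤ r := by
    intro r hr hrb
    obtain ⟨j, hj, hrj⟩ := hr.prime.exists_mem_finset_dvd hrb
    rw [Finset.mem_filter, not_lt] at hj
    rw [(Nat.prime_dvd_prime_iff_eq hr (hp j hj.1)).1 (hr.dvd_of_dvd_pow hrj)]
    exact hmono hi hj.1 hj.2
  exact_mod_cast h.le_mul_of_mul_eq hsplit (by nlinarith) hprimes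

theorem delta0_le_iff_structure_general (n : ℕ) (z : ℝ) (hz : 1 ≤ z)
    (k : ℕ) (p e : Fin k → ℕ) (hp : ∀ i, (p i).Prime) (he : ∀ i, 1 ≤ e i)
    (hmono : StrictMono p) (hfac : n = ∏ i, p i ^ e i) :
    Delta0 n ≤ z ↔
      ∀ i : Fin k, (p i : ℝ) ≤ z * ∏ j ∈ Finset.Iio i, (p j : ℝ) ^ (e j) := by
  have hn : n ≠ 0 := hfac ▸ Finset.prod_ne_zero_iff.2 fun i _ => pow_ne_zero _ (hp i).ne_zero
  have hIio : ∀ i : Fin k, ({j | j < i} : Finset (Fin k)) = Finset.Iio i :=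
    fun _ => Finset.filter_gt_eq_Iio
  rw [delta0_le_iff hn, and_iff_right hz, hfac]
  constructor
  · intro h i
    rw [← hIio]
    exact h.le_mul_prod_filter_lt (fun i _ => hp i) (fun i _ => he i)
      (hmono.monotone.monotoneOn _) i (Finset.mem_univ i)
  · intro h
    refine (divisorsIcoCover_prod fun i _ => ?_).divisorsRatioDense hz
    rw [hIio]
    exact h i

/-- Let `n = p_1^{e_1} ⋯ p_k^{e_k}` with primes `p_1 < ⋯ < p_k` and `e_i ≥ 1`,
and let `z ≥ 1`. Then `Δ₀(n) ≤ z` iff `p_i ≤ z · ∏_{j < i} p_j^{e_j}` for all `i`. -/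
theorem delta0_le_iff_structure (n : ℕ) (hn : 1 < n) (z : ℝ) (hz : 1 ≤ z)
    (k : ℕ) (p e : Fin k → ℕ) (hp : ∀ i, (p i).Prime) (he : ∀ i, 1 ≤ e i)
    (hmono : StrictMono p) (hfac : n = ∏ i, p i ^ e i) :
    Delta0 n ≤ z ↔
      ∀ i : Fin k, (p i : ℝ) ≤ z * ∏ j ∈ Finset.Iio i, (p j : ℝ) ^ (e j) :=
  delta0_le_iff_structure_general n z hz k p e hp he hmono hfac
end

section
/- For every real constant α < 1, the series ∑_{n ∈ E, n ≥ 2} (log n)^α / n converges, where E = {n ≥ 2 : τ(n) ≥ (log n)^3}. -/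
/-!
On `E` we have `(log n)^α / n ≤ τ(n) / (n (log n)^s)` with `s = 3 - α > 2`, so it suffices that
`∑ τ(n) / (n (log n)^s)` converges. Counting `τ(n)` as the number of factorisations `n = d m`
turns this into a sum over pairs `(d, m)`; since `max(log d, log 2) · max(log m, log 2) ≤ (log dm)^2`
when `dm ≥ 2`, it is dominated by the square of the Bertrand series
`∑ 1 / (k max(log k, log 2)^(s/2))`, which converges by Cauchy condensation.
-/

open Real

lemma summable_inv_mul_max_log_rpow {p : ℝ} (hp : 1 < p) :
    Summable fun n : ℕ => ((n : ℝ) * max (log n) (log 2) ^ p)⁻¹ := by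
  have hlog2 : 0 < log 2 := log_pos one_lt_two
  refine (summable_condensed_iff_of_nonneg (fun n => by positivity) fun m n hm hmn => ?_).mp ?_
  · have hm' : (0 : ℝ) < m := by exact_mod_cast hm
    gcongr
  rw [← summable_nat_add_iff 1]
  have hterm : ∀ k : ℕ,
      (2 : ℝ) ^ (k + 1) * (((2 ^ (k + 1) : ℕ) : ℝ) * max (log ((2 ^ (k + 1) : ℕ) : ℝ)) (log 2) ^ p)⁻¹
        = (log 2 ^ p)⁻¹ * (((k + 1 : ℕ) : ℝ) ^ p)⁻¹ := by
    intro k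
    have hmax : max (log ((2 ^ (k + 1) : ℕ) : ℝ)) (log 2) = (k + 1 : ℕ) * log 2 := by
      rw [Nat.cast_pow, Nat.cast_ofNat, log_pow, max_eq_left]
      exact le_mul_of_one_le_left hlog2.le (by simp)
    rw [hmax, mul_rpow (by positivity) hlog2.le]
    push_cast
    field_simp
  simp_rw [hterm]
  exact ((summable_nat_add_iff 1).mpr (summable_nat_rpow_inv.mpr hp)).mul_left _

lemma inv_mul_log_rpow_le_mul {p : ℝ} (hp : 0 < p) (d m : ℕ) :
    (((d * m : ℕ) : ℝ) * log (d * m : ℕ) ^ (2 * p))⁻¹ ≤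
      ((d : ℝ) * max (log d) (log 2) ^ p)⁻¹ * ((m : ℝ) * max (log m) (log 2) ^ p)⁻¹ := by
  rcases Nat.lt_or_ge (d * m) 2 with hdm | hdm
  · have hlog : log (d * m : ℕ) = 0 := log_eq_zero.mpr (by interval_cases d * m <;> simp)
    rw [hlog, zero_rpow (by positivity), mul_zero, inv_zero]
    positivity
  have hd : 1 ≤ d := Nat.pos_of_ne_zero (left_ne_zero_of_mul (show d * m ≠ 0 by omega))
  have hm : 1 ≤ m := Nat.pos_of_ne_zero (right_ne_zero_of_mul (show d * m ≠ 0 by omega))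
  have hlogd : 0 ≤ log d := log_nonneg (by exact_mod_cast hd)
  have hlogm : 0 ≤ log m := log_nonneg (by exact_mod_cast hm)
  have hsum : log (d * m : ℕ) = log d + log m := by
    push_cast
    exact log_mul (by positivity) (by positivity)
  have hlog2_le : log 2 ≤ log d + log m := by
    rw [← hsum]; exact log_le_log two_pos (by exact_mod_cast hdm)
  have hmax_d : max (log d) (log 2) ≤ log d + log m := max_le (by linarith) hlog2_le
  have hmax_m : max (log m) (log 2) ≤ log d + log m := max_le (by linarith) hlog2_le
  rw [← mul_inv]
  refine inv_anti₀ (by positivity) ?_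
  calc (d : ℝ) * max (log d) (log 2) ^ p * (m * max (log m) (log 2) ^ p)
      = ((d * m : ℕ) : ℝ) * (max (log d) (log 2) * max (log m) (log 2)) ^ p := by
        rw [mul_rpow (by positivity) (by positivity)]; push_cast; ring
    _ ≤ ((d * m : ℕ) : ℝ) * ((log d + log m) ^ 2) ^ p := by
        gcongr
        rw [sq]; gcongr
    _ = ((d * m : ℕ) : ℝ) * log (d * m : ℕ) ^ (2 * p) := by
        rw [hsum, ← rpow_natCast_mul (by positivity), Nat.cast_ofNat]

lemma summable_card_divisors_mul {h : ℕ → ℝ} (hh : Summable fun q : ℕ × ℕ => h (q.1 * q.2)) :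
    Summable fun n : ℕ => (n.divisors.card : ℝ) * h n := by
  have hfib := (hh.hasSum.tsum_fiberwise fun q => q.1 * q.2).summable
  refine (summable_nat_add_iff 1).mp
    ((hfib.comp_injective (add_left_injective 1)).congr fun n => ?_)
  rw [Function.comp_apply, show (fun q : ℕ × ℕ => q.1 * q.2) ⁻¹' {n + 1} =
      ↑(n + 1).divisorsAntidiagonal by ext; simp,
    Finset.tsum_subtype' (n + 1).divisorsAntidiagonal fun q : ℕ × ℕ => h (q.1 * q.2)]
  calc ∑ q ∈ (n + 1).divisorsAntidiagonal, h (q.1 * q.2)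
      = ∑ _q ∈ (n + 1).divisorsAntidiagonal, h (n + 1) :=
        Finset.sum_congr rfl fun q hq => by rw [(Nat.mem_divisorsAntidiagonal.mp hq).1]
    _ = ((n + 1).divisors.card : ℝ) * h (n + 1) := by
        rw [Finset.sum_const, ← Nat.map_div_right_divisors, Finset.card_map, nsmul_eq_mul]

lemma summable_card_divisors_mul_inv_mul_log_rpow {s : ℝ} (hs : 2 < s) :
    Summable fun n : ℕ => (n.divisors.card : ℝ) * ((n : ℝ) * log n ^ s)⁻¹ := by
  obtain ⟨p, hp, rfl⟩ : ∃ p, 1 < p ∧ s = 2 * p := ⟨s / 2, by linarith, by ring⟩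
  have hw := summable_inv_mul_max_log_rpow hp
  refine summable_card_divisors_mul (h := fun n => ((n : ℝ) * log n ^ (2 * p))⁻¹) ?_
  exact (hw.mul_of_nonneg hw (fun n => by positivity) fun n => by positivity).of_nonneg_of_le
    (fun q => by positivity) fun q => inv_mul_log_rpow_le_mul (by linarith) q.1 q.2

/-- For every real `α < 1`, the series `∑_{n ∈ E} (log n)^α / n` converges, where
`E = {n ≥ 2 : τ(n) ≥ (log n)^3}`. -/
theorem summable_over_large_divisor_function (α : ℝ) (hα : α < 1) :
    Summable (fun n : {m : ℕ // 2 ≤ m ∧ (Real.log m) ^ 3 ≤ (m.divisors.card : ℝ)} =>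
      Real.log (n : ℕ) ^ α / ((n : ℕ) : ℝ)) := by
  have hτ := summable_card_divisors_mul_inv_mul_log_rpow (s := 3 - α) (by linarith)
  refine (hτ.subtype _).of_nonneg_of_le (fun n => by positivity) fun ⟨n, hn, hτn⟩ => ?_
  have hlog : 0 < log n := log_pos (by exact_mod_cast hn)
  calc log n ^ α / n = log n ^ 3 * ((n : ℝ) * log n ^ (3 - α))⁻¹ := by
        rw [← rpow_natCast, Nat.cast_ofNat, rpow_sub hlog]
        field_simp
    _ ≤ n.divisors.card * ((n : ℝ) * log n ^ (3 - α))⁻¹ := by gcongr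
end
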